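/- arXiv:1111.1780 — 5 statements merged into one kernel-verified Lean document; each statement's English description precedes it below -/
import Mathlib

section
/- Let n, m ≥ 1, let f ∈ ℝ^m and r^1, …, r^k ∈ ℝ^m, and let B ∈ ℝ^{n×m} be a matrix such that M(B) is a lattice-free convex set with f in its interior. Then for every s ∈ R_f one has ∑_{j=1}^k ψ_B(r^j) s_j ≥ 1. -/
open Matrix Pointwise

noncomputable section

/-- A point of `ℝ^m` is an integer point if all its coordinates are integers. -/
def IsIntPoint {m : ℕ} (x : Fin m → ℝ) : Prop := ∀ i, ∃ z : ℤ, x i = (z : ℝ)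

/-- A set is lattice-free if its interior contains no integer point. -/
def IsLatticeFree {m : ℕ} (S : Set (Fin m → ℝ)) : Prop :=
  ∀ x ∈ interior S, ¬ IsIntPoint x

/-- `M(B) = {x ∈ ℝ^m | bⁱ · (x - f) ≤ 1 for all rows bⁱ of B}`. -/
def Mset {n m : ℕ} (f : Fin m → ℝ) (B : Matrix (Fin n) (Fin m) ℝ) :
    Set (Fin m → ℝ) :=
  {x | ∀ i, B i ⬝ᵥ (x - f) ≤ 1}

/-- `ψ_B(r) = max_i bⁱ · r` (the Minkowski functional of `M(B)`). -/
def psi {n m : ℕ} (B : Matrix (Fin n) (Fin m) ℝ) (r : Fin m → ℝ) : ℝ :=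
  ⨆ i, B i ⬝ᵥ r

/-- `γ(B) = (ψ_B(r^1), …, ψ_B(r^k))`. -/
def gammaVec {n k : ℕ} (r : Fin k → Fin 2 → ℝ) (B : Matrix (Fin n) (Fin 2) ℝ) :
    Fin k → ℝ :=
  fun j => psi B (r j)

/-- The nonnegative orthant `ℝ^k_+`. -/
def orthant (k : ℕ) : Set (Fin k → ℝ) := {x | ∀ i, 0 ≤ x i}

/-- `Δ = {γ(B) | B ∈ ℝ^{3×2}, M(B) lattice-free}`. -/
def Delta {k : ℕ} (f : Fin 2 → ℝ) (r : Fin k → Fin 2 → ℝ) : Set (Fin k → ℝ) :=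
  {g | ∃ B : Matrix (Fin 3) (Fin 2) ℝ, IsLatticeFree (Mset f B) ∧ g = gammaVec r B}

/-- `Δ' = cl(conv Δ) + ℝ^k_+` (Minkowski sum). -/
def Delta' {k : ℕ} (f : Fin 2 → ℝ) (r : Fin k → Fin 2 → ℝ) : Set (Fin k → ℝ) :=
  closure (convexHull ℝ (Delta f r)) + orthant k

/-- The triangle closure `T = {s ∈ ℝ^k_+ | γ · s ≥ 1 for all γ ∈ Δ}`. -/
def Tset {k : ℕ} (f : Fin 2 → ℝ) (r : Fin k → Fin 2 → ℝ) : Set (Fin k → ℝ) :=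
  {s | s ∈ orthant k ∧ ∀ g ∈ Delta f r, 1 ≤ g ⬝ᵥ s}

/-- `x` is an extreme point of `K`: `x ∈ K` and `x` is not the midpoint of two
points of `K` both different from `x`. -/
def IsExtremePt {E : Type*} [AddCommGroup E] [Module ℝ E] (K : Set E) (x : E) : Prop :=
  x ∈ K ∧ ¬ ∃ y₁ ∈ K, ∃ y₂ ∈ K, y₁ ≠ x ∧ y₂ ≠ x ∧ x = (2⁻¹ : ℝ) • (y₁ + y₂)

/-- A vector is rational if all its coordinates are rational. -/
def IsRatVec {m : ℕ} (x : Fin m → ℝ) : Prop := ∀ i, ∃ q : ℚ, x i = (q : ℝ)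

/-- A maximal lattice-free convex set. -/
def IsMaxLatticeFree {m : ℕ} (S : Set (Fin m → ℝ)) : Prop :=
  Convex ℝ S ∧ IsLatticeFree S ∧
    ∀ S' : Set (Fin m → ℝ), Convex ℝ S' → IsLatticeFree S' → S ⊆ S' → S' = S

/-! The integral point `x = f + ∑ⱼ sⱼ rʲ` is not interior to `M(B)`, so it violates one of the
strict inequalities, which define an open subset of `M(B)`:
`1 ≤ bⁱ · (x - f) = ∑ⱼ sⱼ (bⁱ · rʲ) ≤ ∑ⱼ ψ_B(rʲ) sⱼ`, the last step because `sⱼ ≥ 0`. -/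

section

variable {n m : ℕ} (f : Fin m → ℝ) (B : Matrix (Fin n) (Fin m) ℝ)

theorem isOpen_setOf_forall_dotProduct_sub_lt_one :
    IsOpen {x : Fin m → ℝ | ∀ i, B i ⬝ᵥ (x - f) < 1} := by
  simp only [Set.ofPred_forall]
  exact isOpen_iInter_of_finite fun i =>
    isOpen_lt (continuous_const.dotProduct (continuous_id.sub continuous_const)) continuous_const

theorem exists_one_le_dotProduct_sub_of_notMem_interior_Mset {x : Fin m → ℝ}
    (hx : x ∉ interior (Mset f B)) : ∃ i, 1 ≤ B i ⬝ᵥ (x - f) := by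
  by_contra! h
  exact hx <| interior_maximal (fun y hy i => (hy i).le)
    (isOpen_setOf_forall_dotProduct_sub_lt_one f B) h

theorem dotProduct_le_psi (r : Fin m → ℝ) (i : Fin n) : B i ⬝ᵥ r ≤ psi B r :=
  le_ciSup (f := fun i => B i ⬝ᵥ r) (Set.finite_range _).bddAbove i

theorem dotProduct_sum_smul_le_sum_psi_mul {k : ℕ} (r : Fin k → Fin m → ℝ) {s : Fin k → ℝ}
    (hs : ∀ j, 0 ≤ s j) (i : Fin n) :
    B i ⬝ᵥ ∑ j, s j • r j ≤ ∑ j, psi B (r j) * s j := by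
  rw [dotProduct_sum]
  gcongr with j
  rw [dotProduct_smul, smul_eq_mul, mul_comm]
  exact mul_le_mul_of_nonneg_right (dotProduct_le_psi B (r j) i) (hs j)

end

theorem stmt0_general (n m k : ℕ)
    (f : Fin m → ℝ) (r : Fin k → Fin m → ℝ)
    (B : Matrix (Fin n) (Fin m) ℝ)
    (hlf : IsLatticeFree (Mset f B))
    (s : Fin k → ℝ) (hs : ∀ j, 0 ≤ s j)
    (hx : IsIntPoint (f + ∑ j, s j • r j)) :
    1 ≤ ∑ j, psi B (r j) * s j := by
  obtain ⟨i, hi⟩ := exists_one_le_dotProduct_sub_of_notMem_interior_Mset f B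
    fun hint => hlf _ hint hx
  rw [add_sub_cancel_left] at hi
  exact hi.trans (dotProduct_sum_smul_le_sum_psi_mul B r hs i)

/-- if `M(B)` is a lattice-free convex set with `f` in its interior,
then `∑_j ψ_B(r^j) s_j ≥ 1` is valid for every `s ∈ R_f`. -/
theorem stmt0 (n m k : ℕ) (hn : 1 ≤ n) (hm : 1 ≤ m)
    (f : Fin m → ℝ) (r : Fin k → Fin m → ℝ)
    (B : Matrix (Fin n) (Fin m) ℝ)
    (hlf : IsLatticeFree (Mset f B))
    (hf : f ∈ interior (Mset f B))
    (s : Fin k → ℝ) (hs : ∀ j, 0 ≤ s j)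
    (hx : IsIntPoint (f + ∑ j, s j • r j)) :
    1 ≤ ∑ j, psi B (r j) * s j :=
  stmt0_general n m k f r B hlf s hs hx
end
end

section
/- Δ' is a closed convex subset of ℝ^k_+ whose recession cone is exactly ℝ^k_+. -/
open Matrix Pointwise

noncomputable section

lemma strictSet_subset_interior {n : ℕ} (f : Fin 2 → ℝ) (B : Matrix (Fin n) (Fin 2) ℝ) :
    {x : Fin 2 → ℝ | ∀ i, B i ⬝ᵥ (x - f) < 1} ⊆ interior (Mset f B) := by
  apply interior_maximal
  · intro x hx i; exact le_of_lt (hx i)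
  · have : {x : Fin 2 → ℝ | ∀ i, B i ⬝ᵥ (x - f) < 1}
        = ⋂ i, {x : Fin 2 → ℝ | B i ⬝ᵥ (x - f) < 1} := by
      ext x; simp [Set.mem_iInter]
    rw [this]
    apply isOpen_iInter_of_finite
    intro i
    have hc : Continuous fun x : Fin 2 → ℝ => B i ⬝ᵥ (x - f) := by
      simp only [dotProduct]
      exact continuous_finset_sum _ fun j _ =>
        continuous_const.mul ((continuous_apply j).sub continuous_const)
    exact isOpen_lt hc continuous_const

lemma psi_nonneg (f : Fin 2 → ℝ) (B : Matrix (Fin 3) (Fin 2) ℝ)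
    (hB : IsLatticeFree (Mset f B)) (r : Fin 2 → ℝ) : 0 ≤ psi B r := by
  by_contra hneg
  push_neg at hneg
  have hlt : ∀ i, B i ⬝ᵥ r < 0 := by
    intro i
    have : B i ⬝ᵥ r ≤ psi B r := by
      unfold psi
      exact le_ciSup (Set.Finite.bddAbove (Set.finite_range fun i => B i ⬝ᵥ r)) i
    linarith
  set C : Fin 3 → ℝ := fun i => |B i 0| + |B i 1| with hC
  set t : ℝ := Finset.univ.sup' Finset.univ_nonempty
      (fun i => C i / (-(B i ⬝ᵥ r))) with htdef
  set z : Fin 2 → ℝ := fun j => ((round (f j + t * r j) : ℤ) : ℝ) with hz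
  have hzint : IsIntPoint z := fun j => ⟨round (f j + t * r j), rfl⟩
  have hzmem : z ∈ interior (Mset f B) := by
    apply strictSet_subset_interior
    intro i
    have ht : C i / (-(B i ⬝ᵥ r)) ≤ t :=
      Finset.le_sup' (fun i => C i / (-(B i ⬝ᵥ r))) (Finset.mem_univ i)
    have hd : 0 < -(B i ⬝ᵥ r) := by linarith [hlt i]
    have hkey : t * (B i ⬝ᵥ r) ≤ -C i := by
      have := (div_le_iff₀ hd).mp ht
      nlinarith
    have h0 : |z 0 - (f 0 + t * r 0)| ≤ 1/2 := by
      simpa [hz, abs_sub_comm] using abs_sub_round (f 0 + t * r 0)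
    have h1 : |z 1 - (f 1 + t * r 1)| ≤ 1/2 := by
      simpa [hz, abs_sub_comm] using abs_sub_round (f 1 + t * r 1)
    have b0 : B i 0 * (z 0 - (f 0 + t * r 0)) ≤ |B i 0| * (1/2) := by
      calc B i 0 * (z 0 - (f 0 + t * r 0)) ≤ |B i 0 * (z 0 - (f 0 + t * r 0))| := le_abs_self _
      _ = |B i 0| * |z 0 - (f 0 + t * r 0)| := abs_mul _ _
      _ ≤ |B i 0| * (1/2) := mul_le_mul_of_nonneg_left h0 (abs_nonneg _)
    have b1 : B i 1 * (z 1 - (f 1 + t * r 1)) ≤ |B i 1| * (1/2) := by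
      calc B i 1 * (z 1 - (f 1 + t * r 1)) ≤ |B i 1 * (z 1 - (f 1 + t * r 1))| := le_abs_self _
      _ = |B i 1| * |z 1 - (f 1 + t * r 1)| := abs_mul _ _
      _ ≤ |B i 1| * (1/2) := mul_le_mul_of_nonneg_left h1 (abs_nonneg _)
    have hdot : B i ⬝ᵥ (z - f) = t * (B i ⬝ᵥ r)
        + (B i 0 * (z 0 - (f 0 + t * r 0)) + B i 1 * (z 1 - (f 1 + t * r 1))) := by
      simp only [dotProduct, Fin.sum_univ_two, Pi.sub_apply]
      ring
    have hCnn : 0 ≤ C i := add_nonneg (abs_nonneg _) (abs_nonneg _)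
    have hCi : C i = |B i 0| + |B i 1| := rfl
    rw [hdot]
    linarith
  exact hB z hzmem hzint

lemma not_interior_of_lb {S : Set (Fin 2 → ℝ)} {j : Fin 2} {b : ℝ}
    (hS : ∀ y ∈ S, b ≤ y j) {x : Fin 2 → ℝ} (hx : x j = b) : x ∉ interior S := by
  intro h
  rw [mem_interior_iff_mem_nhds, Metric.mem_nhds_iff] at h
  obtain ⟨ε, hε, hball⟩ := h
  set y : Fin 2 → ℝ := Function.update x j (b - ε/2) with hy
  have hmem : y ∈ Metric.ball x ε := by
    rw [Metric.mem_ball, dist_pi_lt_iff hε]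
    intro i
    by_cases hij : i = j
    · subst hij
      simp only [hy, Function.update_self, Real.dist_eq, hx]
      rw [show b - ε / 2 - b = -(ε / 2) by ring, abs_neg, abs_of_nonneg (by linarith)]
      linarith
    · simp only [hy, Function.update_of_ne hij, Real.dist_eq, sub_self, abs_zero]
      exact hε
  have := hS y (hball hmem)
  simp only [hy, Function.update_self] at this
  linarith

lemma not_interior_of_ub {S : Set (Fin 2 → ℝ)} {j : Fin 2} {b : ℝ}
    (hS : ∀ y ∈ S, y j ≤ b) {x : Fin 2 → ℝ} (hx : x j = b) : x ∉ interior S := by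
  intro h
  rw [mem_interior_iff_mem_nhds, Metric.mem_nhds_iff] at h
  obtain ⟨ε, hε, hball⟩ := h
  set y : Fin 2 → ℝ := Function.update x j (b + ε/2) with hy
  have hmem : y ∈ Metric.ball x ε := by
    rw [Metric.mem_ball, dist_pi_lt_iff hε]
    intro i
    by_cases hij : i = j
    · subst hij
      simp only [hy, Function.update_self, Real.dist_eq, hx]
      rw [show b + ε / 2 - b = ε / 2 by ring, abs_of_nonneg (by linarith)]
      linarith
    · simp only [hy, Function.update_of_ne hij, Real.dist_eq, sub_self, abs_zero]
      exact hε
  have := hS y (hball hmem)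
  simp only [hy, Function.update_self] at this
  linarith

lemma delta_nonempty {k : ℕ} (f : Fin 2 → ℝ) (hf : ¬ IsIntPoint f)
    (r : Fin k → Fin 2 → ℝ) : (Delta f r).Nonempty := by
  unfold IsIntPoint at hf
  push_neg at hf
  obtain ⟨j, hj⟩ := hf
  set a : ℝ := (⌊f j⌋ : ℝ) with ha
  have haf : a < f j := lt_of_le_of_ne (Int.floor_le _) (fun h => hj ⌊f j⌋ h.symm)
  have hfa : f j < a + 1 := Int.lt_floor_add_one _
  set c : Fin 3 → ℝ := ![(a + 1 - f j)⁻¹, -((f j - a)⁻¹), (a + 1 - f j)⁻¹] with hc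
  set B : Matrix (Fin 3) (Fin 2) ℝ := fun i => Pi.single j (c i) with hB
  have hdot : ∀ (i : Fin 3) (v : Fin 2 → ℝ), B i ⬝ᵥ v = c i * v j := by
    intro i v
    rw [hB]
    exact single_dotProduct v (c i) j
  have hMsub : ∀ x ∈ Mset f B, a ≤ x j ∧ x j ≤ a + 1 := by
    intro x hx
    have h0 := hx 0
    have h1 := hx 1
    rw [hdot] at h0 h1
    simp only [hc, Matrix.cons_val_zero, Matrix.cons_val_one, Matrix.head_cons,
      Pi.sub_apply] at h0 h1
    constructor
    · have hpos : 0 < f j - a := by linarith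
      have key := mul_le_mul_of_nonneg_right h1 (le_of_lt hpos)
      have hcancel : (f j - a)⁻¹ * (f j - a) = 1 := inv_mul_cancel₀ (ne_of_gt hpos)
      have hrw : -(f j - a)⁻¹ * (x j - f j) * (f j - a)
          = -(x j - f j) * ((f j - a)⁻¹ * (f j - a)) := by ring
      rw [hrw, hcancel] at key
      linarith
    · have hpos : 0 < a + 1 - f j := by linarith
      have key := mul_le_mul_of_nonneg_right h0 (le_of_lt hpos)
      have hcancel : (a + 1 - f j)⁻¹ * (a + 1 - f j) = 1 := inv_mul_cancel₀ (ne_of_gt hpos)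
      have hrw : (a + 1 - f j)⁻¹ * (x j - f j) * (a + 1 - f j)
          = (x j - f j) * ((a + 1 - f j)⁻¹ * (a + 1 - f j)) := by ring
      rw [hrw, hcancel] at key
      linarith
  have hlf : IsLatticeFree (Mset f B) := by
    intro x hx hint
    obtain ⟨z, hzx⟩ := hint j
    have hxM := interior_subset hx
    obtain ⟨hl, hu⟩ := hMsub x hxM
    rw [hzx] at hl hu
    have hz1 : (⌊f j⌋ : ℝ) ≤ (z : ℝ) := hl
    have hz2 : (z : ℝ) ≤ (⌊f j⌋ : ℝ) + 1 := hu
    have hz1' : ⌊f j⌋ ≤ z := by exact_mod_cast hz1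
    have hz2' : z ≤ ⌊f j⌋ + 1 := by exact_mod_cast hz2
    have : z = ⌊f j⌋ ∨ z = ⌊f j⌋ + 1 := by omega
    rcases this with h | h
    · exact not_interior_of_lb (fun y hy => (hMsub y hy).1)
        (by rw [hzx, h, ha]) hx
    · exact not_interior_of_ub (fun y hy => (hMsub y hy).2)
        (by rw [hzx, h, ha]; push_cast; ring) hx
  exact ⟨gammaVec r B, B, hlf, rfl⟩

lemma orthant_isClosed (k : ℕ) : IsClosed (orthant k) := by
  have : orthant k = ⋂ i, {x : Fin k → ℝ | 0 ≤ x i} := by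
    ext x; simp [orthant, Set.mem_iInter]
  rw [this]
  exact isClosed_iInter fun i => isClosed_le continuous_const (continuous_apply i)

lemma orthant_convex (k : ℕ) : Convex ℝ (orthant k) := by
  intro x hx y hy s t hs ht hst i
  simp only [Pi.add_apply, Pi.smul_apply, smul_eq_mul]
  exact add_nonneg (mul_nonneg hs (hx i)) (mul_nonneg ht (hy i))

/-- `Δ'` is a closed convex subset of `ℝ^k_+` whose recession cone is
exactly `ℝ^k_+`. -/
theorem stmt3 (k : ℕ) (hk : 1 ≤ k) (f : Fin 2 → ℝ) (hf : ¬ IsIntPoint f)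
    (r : Fin k → Fin 2 → ℝ) :
    IsClosed (Delta' f r) ∧ Convex ℝ (Delta' f r) ∧ Delta' f r ⊆ orthant k ∧
      {d : Fin k → ℝ | ∀ c ∈ Delta' f r, ∀ t : ℝ, 0 ≤ t → c + t • d ∈ Delta' f r} =
        orthant k := by
  have hΔorth : Delta f r ⊆ orthant k := by
    rintro g ⟨B, hB, rfl⟩ i
    exact psi_nonneg f B hB (r i)
  set C := closure (convexHull ℝ (Delta f r)) with hCdef
  have hCorth : C ⊆ orthant k :=
    closure_minimal (convexHull_min hΔorth (orthant_convex k)) (orthant_isClosed k)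
  have hsub : Delta' f r ⊆ orthant k := by
    rintro x hx
    rw [Delta', Set.mem_add] at hx
    obtain ⟨p, hp, q, hq, rfl⟩ := hx
    intro i
    exact add_nonneg (hCorth hp i) (hq i)
  have hconv : Convex ℝ (Delta' f r) :=
    Convex.add (convex_convexHull ℝ _).closure (orthant_convex k)
  have hclosed : IsClosed (Delta' f r) := by
    rw [← isSeqClosed_iff_isClosed]
    intro u x hu hx
    have hu' : ∀ n, ∃ p ∈ C, ∃ q ∈ orthant k, p + q = u n := by
      intro n
      have := hu n
      rwa [Delta', Set.mem_add] at this
    choose a ha b hb hab using hu'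
    obtain ⟨R, hRmem⟩ := hx.norm.bddAbove_range
    have hR : ∀ n, ‖u n‖ ≤ R := fun n => hRmem ⟨n, rfl⟩
    have hR0 : 0 ≤ R := le_trans (norm_nonneg _) (hR 0)
    have han : ∀ n, ‖a n‖ ≤ R := by
      intro n
      rw [pi_norm_le_iff_of_nonneg hR0]
      intro i
      have h1 : 0 ≤ a n i := hCorth (ha n) i
      have h2 : 0 ≤ b n i := hb n i
      have h3 : a n i + b n i = u n i := congrFun (hab n) i
      have h4 : a n i ≤ ‖u n‖ := by
        calc a n i ≤ u n i := by linarith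
        _ ≤ |u n i| := le_abs_self _
        _ = ‖u n i‖ := (Real.norm_eq_abs _).symm
        _ ≤ ‖u n‖ := norm_le_pi_norm _ i
      rw [Real.norm_eq_abs, abs_of_nonneg h1]
      exact le_trans h4 (hR n)
    set s := C ∩ Metric.closedBall 0 R with hs
    have hmem : ∀ n, a n ∈ s := fun n =>
      ⟨ha n, by rw [Metric.mem_closedBall, dist_zero_right]; exact han n⟩
    obtain ⟨p, hp, φ, hφ, hconv'⟩ :=
      tendsto_subseq_of_bounded (Metric.isBounded_closedBall.subset Set.inter_subset_right) hmem
    have hpC : p ∈ C := by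
      have := closure_mono (Set.inter_subset_left (t := Metric.closedBall (0 : Fin k → ℝ) R)) hp
      rwa [isClosed_closure.closure_eq] at this
    have hxp : x - p ∈ orthant k := by
      have htend : Filter.Tendsto (fun n => u (φ n) - a (φ n)) Filter.atTop (nhds (x - p)) :=
        (hx.comp hφ.tendsto_atTop).sub hconv'
      have heq : ∀ n, u (φ n) - a (φ n) = b (φ n) := by
        intro n; rw [← hab (φ n)]; abel
      rw [show (fun n => u (φ n) - a (φ n)) = fun n => b (φ n) from funext heq] at htend
      exact (orthant_isClosed k).mem_of_tendsto htend
        (Filter.Eventually.of_forall fun n => hb (φ n))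
    rw [Delta', Set.mem_add]
    exact ⟨p, hpC, x - p, hxp, by abel⟩
  refine ⟨hclosed, hconv, hsub, ?_⟩
  ext d
  simp only [Set.mem_setOf_eq]
  constructor
  · intro h
    obtain ⟨g, hg⟩ := delta_nonempty f hf r
    have hgD : g ∈ Delta' f r := by
      rw [Delta', Set.mem_add]
      exact ⟨g, subset_closure (subset_convexHull ℝ _ hg), 0, fun i => le_refl 0, add_zero g⟩
    intro i
    by_contra hneg
    push_neg at hneg
    have hgi : 0 ≤ g i := hsub hgD i
    set t : ℝ := (g i + 1) / (-d i) with htdef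
    have ht : 0 ≤ t := div_nonneg (by linarith) (by linarith)
    have hmem := hsub (h g hgD t ht) i
    have hdne : d i ≠ 0 := ne_of_lt hneg
    have htd : t * d i = -(g i + 1) := by
      rw [htdef, div_mul_eq_mul_div, div_eq_iff (neg_ne_zero.mpr hdne)]
      ring
    simp only [Pi.add_apply, Pi.smul_apply, smul_eq_mul] at hmem
    linarith
  · intro hd c hc t ht
    rw [Delta', Set.mem_add] at hc ⊢
    obtain ⟨p, hp, q, hq, hpq⟩ := hc
    refine ⟨p, hp, q + t • d, ?_, ?_⟩
    · intro i
      simp only [Pi.add_apply, Pi.smul_apply, smul_eq_mul]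
      exact add_nonneg (hq i) (mul_nonneg ht (hd i))
    · rw [← hpq]; abel
end
end

section
/- Let m, n ≥ 1, f ∈ ℝ^m, and let B ∈ ℝ^{n×m} be such that M(B) is bounded and is a maximal lattice-free set. Then for every matrix Ā ∈ ℝ^{n×m} there exists δ > 0 such that for all 0 < ε < δ, every integer point contained in M(B + εĀ) is also contained in M(B), i.e., M(B + εĀ) ∩ ℤ^m ⊆ M(B) ∩ ℤ^m. -/
open Matrix Pointwise

noncomputable section

/-! An integer point of `M(B + εĀ)` outside `M(B)` violates some inequality `bⁱ·(x - f) ≤ 1`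
strictly, and a strict violation survives small perturbations of `B`. Only finitely many integer
points need to be handled: scaling by `t = 1 + |ε|‖Ā‖‖x - f‖` turns `M(B) ⊆ closedBall f R` into
`M(B + εĀ) ⊆ closedBall f (2R)` as soon as `|ε|‖Ā‖R ≤ 1/2`. -/

open Filter Topology Metric

lemma isIntPoint_iff_mem_range {m : ℕ} (x : Fin m → ℝ) :
    IsIntPoint x ↔ x ∈ Set.range (Pi.map fun _ : Fin m => ((↑) : ℤ → ℝ)) := by
  simp only [IsIntPoint, Set.mem_range, funext_iff, Pi.map_apply, eq_comm (b := x _)]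
  exact Classical.skolem

lemma IsCompact.finite_inter_setOf_isIntPoint {m : ℕ} {K : Set (Fin m → ℝ)} (hK : IsCompact K) :
    ({x | IsIntPoint x} ∩ K).Finite := by
  have hcast : IsClosedEmbedding (Pi.map fun _ : Fin m => ((↑) : ℤ → ℝ)) :=
    .piMap fun _ => Real.isClosedEmbedding_intCast
  have hset : {x | IsIntPoint x} ∩ K =
      Pi.map (fun _ => ((↑) : ℤ → ℝ)) '' (Pi.map (fun _ : Fin m => ((↑) : ℤ → ℝ)) ⁻¹' K) := by
    rw [Set.image_preimage_eq_range_inter]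
    congr 1
    ext x
    exact isIntPoint_iff_mem_range x
  rw [hset]
  exact ((hcast.isCompact_preimage hK).finite_of_discrete).image _

lemma add_smul_row_dotProduct {ι κ : Type*} [Fintype κ] (B A : Matrix ι κ ℝ) (ε : ℝ) (i : ι)
    (r : κ → ℝ) : (B + ε • A) i ⬝ᵥ r = B i ⬝ᵥ r + ε * (A i ⬝ᵥ r) := by
  change (B i + ε • A i) ⬝ᵥ r = _
  rw [add_dotProduct, smul_dotProduct, smul_eq_mul]

lemma exists_abs_row_dotProduct_le {ι κ : Type*} [Fintype ι] [Fintype κ] (A : Matrix ι κ ℝ) :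
    ∃ C, 0 ≤ C ∧ ∀ i r, |A i ⬝ᵥ r| ≤ C * ‖r‖ := by
  let _ := Matrix.linftyOpNormedAddCommGroup (m := ι) (n := κ) (α := ℝ)
  refine ⟨‖A‖, norm_nonneg A, fun i r => ?_⟩
  calc |A i ⬝ᵥ r| = ‖(A *ᵥ r) i‖ := (Real.norm_eq_abs _).symm
    _ ≤ ‖A *ᵥ r‖ := norm_le_pi_norm _ i
    _ ≤ ‖A‖ * ‖r‖ := linfty_opNorm_mulVec A r

section Mset

variable {m n : ℕ} {f : Fin m → ℝ} {B : Matrix (Fin n) (Fin m) ℝ}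

lemma self_mem_Mset : f ∈ Mset f B := fun i => by simp

lemma norm_le_mul_of_Mset_subset_closedBall {R : ℝ} (hR : Mset f B ⊆ closedBall f R)
    {r : Fin m → ℝ} {t : ℝ} (ht : 0 < t) (hr : ∀ i, B i ⬝ᵥ r ≤ t) : ‖r‖ ≤ t * R := by
  have hmem : f + t⁻¹ • r ∈ Mset f B := fun i => by
    rw [add_sub_cancel_left, dotProduct_smul, smul_eq_mul, inv_mul_le_iff₀ ht, mul_one]
    exact hr i
  have hdist := hR hmem
  rw [mem_closedBall, dist_eq_norm, add_sub_cancel_left, norm_smul, Real.norm_eq_abs,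
    abs_of_pos (inv_pos.2 ht), inv_mul_le_iff₀ ht] at hdist
  exact hdist

lemma eventually_Mset_add_smul_subset_closedBall {R : ℝ} (hR : Mset f B ⊆ closedBall f R)
    (A : Matrix (Fin n) (Fin m) ℝ) :
    ∀ᶠ ε in 𝓝 (0 : ℝ), Mset f (B + ε • A) ⊆ closedBall f (2 * R) := by
  obtain ⟨C, hC, hA⟩ := exists_abs_row_dotProduct_le A
  have hR0 : 0 ≤ R := by simpa using hR self_mem_Mset
  have hsmall : ∀ᶠ ε in 𝓝 (0 : ℝ), |ε| * C * R < 1 / 2 := by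
    refine Tendsto.eventually_lt_const (by norm_num : (0 : ℝ) < 1 / 2) ?_
    exact (by fun_prop : Continuous fun ε : ℝ => |ε| * C * R).tendsto' 0 0 (by simp)
  filter_upwards [hsmall] with ε hε x hx
  set r := x - f
  have hrow : ∀ i, B i ⬝ᵥ r ≤ 1 + |ε| * C * ‖r‖ := fun i => by
    have h1 := hx i
    rw [add_smul_row_dotProduct] at h1
    have h2 : |ε * (A i ⬝ᵥ r)| ≤ |ε| * C * ‖r‖ := by
      rw [abs_mul, mul_assoc]
      exact mul_le_mul_of_nonneg_left (hA i r) (abs_nonneg ε)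
    linarith [neg_abs_le (ε * (A i ⬝ᵥ r))]
  have hbound := norm_le_mul_of_Mset_subset_closedBall hR (by positivity) hrow
  rw [mem_closedBall, dist_eq_norm]
  nlinarith [norm_nonneg r]

lemma eventually_notMem_Mset_add_smul {x : Fin m → ℝ} (hx : x ∉ Mset f B)
    (A : Matrix (Fin n) (Fin m) ℝ) : ∀ᶠ ε in 𝓝 (0 : ℝ), x ∉ Mset f (B + ε • A) := by
  obtain ⟨i, hi⟩ : ∃ i, 1 < B i ⬝ᵥ (x - f) := by
    simpa only [Mset, Set.mem_ofPred_eq, not_forall, not_le] using hx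
  have hcont : Continuous fun ε : ℝ => B i ⬝ᵥ (x - f) + ε * (A i ⬝ᵥ (x - f)) := by fun_prop
  filter_upwards [hcont.continuousAt.eventually_const_lt (by simpa using hi)] with ε hε hmem
  have := hmem i
  rw [add_smul_row_dotProduct] at this
  linarith

end Mset

theorem stmt7_general (m n : ℕ) (f : Fin m → ℝ)
    (B : Matrix (Fin n) (Fin m) ℝ)
    (hbdd : Bornology.IsBounded (Mset f B))
    (A : Matrix (Fin n) (Fin m) ℝ) :
    ∃ δ > (0 : ℝ), ∀ ε : ℝ, 0 < ε → ε < δ →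
      ∀ x : Fin m → ℝ, IsIntPoint x → x ∈ Mset f (B + ε • A) → x ∈ Mset f B := by
  obtain ⟨R, hR⟩ := hbdd.subset_closedBall f
  set escapees := ({x | IsIntPoint x} ∩ closedBall f (2 * R)) \ Mset f B
  have hfin : escapees.Finite := (isCompact_closedBall f _).finite_inter_setOf_isIntPoint.sdiff
  have hev : ∀ᶠ ε in 𝓝 (0 : ℝ), Mset f (B + ε • A) ⊆ closedBall f (2 * R) ∧
      ∀ x ∈ escapees, x ∉ Mset f (B + ε • A) :=
    (eventually_Mset_add_smul_subset_closedBall hR A).and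
      (hfin.eventually_all.2 fun x hx => eventually_notMem_Mset_add_smul hx.2 A)
  obtain ⟨δ, hδ, hball⟩ := Metric.eventually_nhds_iff.1 hev
  refine ⟨δ, hδ, fun ε hε hεδ x hx hxε => by_contra fun hxB => ?_⟩
  obtain ⟨hsub, hout⟩ := hball (by rwa [Real.dist_0_eq_abs, abs_of_pos hε] : dist ε 0 < δ)
  exact hout x ⟨⟨hx, hsub hxε⟩, hxB⟩ hxε

/-- if `M(B)` is a bounded maximal lattice-free set, then for every
matrix `Ā` there is `δ > 0` with `M(B + εĀ) ∩ ℤ^m ⊆ M(B) ∩ ℤ^m` for all `0 < ε < δ`. -/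
theorem stmt7 (m n : ℕ) (hm : 1 ≤ m) (hn : 1 ≤ n) (f : Fin m → ℝ)
    (B : Matrix (Fin n) (Fin m) ℝ)
    (hbdd : Bornology.IsBounded (Mset f B))
    (hmax : IsMaxLatticeFree (Mset f B))
    (A : Matrix (Fin n) (Fin m) ℝ) :
    ∃ δ > (0 : ℝ), ∀ ε : ℝ, 0 < ε → ε < δ →
      ∀ x : Fin m → ℝ, IsIntPoint x → x ∈ Mset f (B + ε • A) → x ∈ Mset f B :=
  stmt7_general m n f B hbdd A
end
end

section
/- Let f ∈ ℝ², let B ∈ ℝ^{n×2} with rows b^1, …, b^n be such that M(B) is lattice-free, and let r^{j_1}, r^{j_2} ∈ ℝ² with ψ_B(r^{j_1}) > 0 and ψ_B(r^{j_2}) > 0. Set p^{j_l} = f + (1/ψ_B(r^{j_l}))·r^{j_l} for l = 1,2 and suppose p^{j_1} ≠ p^{j_2} and both lie on a common facet, i.e., b^i·(p^{j_1}−f) = 1 and b^i·(p^{j_2}−f) = 1 for some index i. Let C = {f + s_1 r^{j_1} + s_2 r^{j_2} : s_1, s_2 ≥ 0} and C_I = conv(C ∩ ℤ²). Then: (i)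 if the closed segment [p^{j_1}, p^{j_2}] contains exactly one integer point y and y lies in the open segment (p^{j_1}, p^{j_2}), then every point x of C_I satisfies b^i·(x−f) ≥ 1 and y is an extreme point of C_I; (ii) if [p^{j_1}, p^{j_2}] contains at least two integer points, then every point x of C_I satisfies b^i·(x−f) ≥ 1 and C_I ∩ {x : b^i·(x−f) = 1} contains at least two integer points. -/
open Matrix Pointwise

noncomputable section

/-- The affine cone `C(r¹, r²) = {f + s₁ r¹ + s₂ r² | s₁, s₂ ≥ 0}`. -/
def rayCone (f r₁ r₂ : Fin 2 → ℝ) : Set (Fin 2 → ℝ) :=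
  {x | ∃ s₁ s₂ : ℝ, 0 ≤ s₁ ∧ 0 ≤ s₂ ∧ x = f + s₁ • r₁ + s₂ • r₂}

/-- The integer hull `conv(C ∩ ℤ²)`. -/
def intHull (C : Set (Fin 2 → ℝ)) : Set (Fin 2 → ℝ) :=
  convexHull ℝ (C ∩ {x | IsIntPoint x})

lemma dot_sum_aux {ι : Type*} (v : Fin 2 → ℝ) (t : Finset ι) (w : ι → ℝ)
    (g : ι → Fin 2 → ℝ) :
    v ⬝ᵥ (∑ j ∈ t, w j • g j) = ∑ j ∈ t, w j * (v ⬝ᵥ g j) := by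
  simp only [dotProduct, Finset.sum_apply, Pi.smul_apply, smul_eq_mul, Finset.mul_sum]
  rw [Finset.sum_comm]
  exact Finset.sum_congr rfl fun j _ => Finset.sum_congr rfl fun k _ => by ring

/-- properties of the integer hull of the cone spanned by two rays
whose ray intersections lie on a common facet of a lattice-free set `M(B)`. -/
theorem stmt10 (n : ℕ) (hn : 1 ≤ n) (f : Fin 2 → ℝ)
    (B : Matrix (Fin n) (Fin 2) ℝ)
    (hlf : IsLatticeFree (Mset f B))
    (r₁ r₂ : Fin 2 → ℝ) (h₁ : 0 < psi B r₁) (h₂ : 0 < psi B r₂)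
    (p₁ p₂ : Fin 2 → ℝ)
    (hp₁ : p₁ = f + (psi B r₁)⁻¹ • r₁) (hp₂ : p₂ = f + (psi B r₂)⁻¹ • r₂)
    (hne : p₁ ≠ p₂) (i : Fin n)
    (hf₁ : B i ⬝ᵥ (p₁ - f) = 1) (hf₂ : B i ⬝ᵥ (p₂ - f) = 1) :
    (∀ y : Fin 2 → ℝ, segment ℝ p₁ p₂ ∩ {x | IsIntPoint x} = {y} →
        y ∈ openSegment ℝ p₁ p₂ →
        (∀ x ∈ intHull (rayCone f r₁ r₂), 1 ≤ B i ⬝ᵥ (x - f)) ∧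
          IsExtremePt (intHull (rayCone f r₁ r₂)) y) ∧
    ((∃ y₁ y₂ : Fin 2 → ℝ, y₁ ≠ y₂ ∧
        y₁ ∈ segment ℝ p₁ p₂ ∩ {x | IsIntPoint x} ∧
        y₂ ∈ segment ℝ p₁ p₂ ∩ {x | IsIntPoint x}) →
      (∀ x ∈ intHull (rayCone f r₁ r₂), 1 ≤ B i ⬝ᵥ (x - f)) ∧
        ∃ y₁ y₂ : Fin 2 → ℝ, y₁ ≠ y₂ ∧ IsIntPoint y₁ ∧ IsIntPoint y₂ ∧
          y₁ ∈ intHull (rayCone f r₁ r₂) ∧ y₂ ∈ intHull (rayCone f r₁ r₂) ∧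
          B i ⬝ᵥ (y₁ - f) = 1 ∧ B i ⬝ᵥ (y₂ - f) = 1) := by

  classical
  have hNe : Nonempty (Fin n) := ⟨⟨0, hn⟩⟩
  -- row i attains psi on r₁ and r₂
  have hd₁ : p₁ - f = (psi B r₁)⁻¹ • r₁ := by rw [hp₁]; abel
  have hd₂ : p₂ - f = (psi B r₂)⁻¹ • r₂ := by rw [hp₂]; abel
  have hψ₁ : B i ⬝ᵥ r₁ = psi B r₁ := by
    have h := hf₁
    rw [hd₁, dotProduct_smul, smul_eq_mul] at h
    have h' : psi B r₁ * ((psi B r₁)⁻¹ * (B i ⬝ᵥ r₁)) = psi B r₁ * 1 := by rw [h]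
    rw [← mul_assoc, mul_inv_cancel₀ h₁.ne', one_mul, mul_one] at h'
    exact h'
  have hψ₂ : B i ⬝ᵥ r₂ = psi B r₂ := by
    have h := hf₂
    rw [hd₂, dotProduct_smul, smul_eq_mul] at h
    have h' : psi B r₂ * ((psi B r₂)⁻¹ * (B i ⬝ᵥ r₂)) = psi B r₂ * 1 := by rw [h]
    rw [← mul_assoc, mul_inv_cancel₀ h₂.ne', one_mul, mul_one] at h'
    exact h'
  have hle : ∀ (j : Fin n) (r : Fin 2 → ℝ), B j ⬝ᵥ r ≤ psi B r := fun j r =>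
    le_ciSup (f := fun l => B l ⬝ᵥ r) (Set.Finite.bddAbove (Set.finite_range _)) j
  -- for a point in the cone, row i dominates all rows
  have hdom : ∀ x ∈ rayCone f r₁ r₂, ∀ j : Fin n, B j ⬝ᵥ (x - f) ≤ B i ⬝ᵥ (x - f) := by
    rintro x ⟨s₁, s₂, hs₁, hs₂, rfl⟩ j
    have hx : f + s₁ • r₁ + s₂ • r₂ - f = s₁ • r₁ + s₂ • r₂ := by abel
    rw [hx, dotProduct_add, dotProduct_add, dotProduct_smul, dotProduct_smul,
      dotProduct_smul, dotProduct_smul, smul_eq_mul, smul_eq_mul, smul_eq_mul, smul_eq_mul,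
      hψ₁, hψ₂]
    have l1 : B j ⬝ᵥ r₁ ≤ psi B r₁ := hle j r₁
    have l2 : B j ⬝ᵥ r₂ ≤ psi B r₂ := hle j r₂
    nlinarith
  -- every integer point of the cone satisfies B i ⬝ᵥ (x - f) ≥ 1
  have hIntGe : ∀ x ∈ rayCone f r₁ r₂ ∩ {x | IsIntPoint x}, (1:ℝ) ≤ B i ⬝ᵥ (x - f) := by
    rintro x ⟨hxC, hxI⟩
    by_contra hlt
    push_neg at hlt
    have hUopen : IsOpen {x : Fin 2 → ℝ | ∀ j, B j ⬝ᵥ (x - f) < 1} := by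
      have he : {x : Fin 2 → ℝ | ∀ j, B j ⬝ᵥ (x - f) < 1}
          = ⋂ j, {x : Fin 2 → ℝ | B j ⬝ᵥ (x - f) < 1} := by
        ext x; simp
      rw [he]
      refine isOpen_iInter_of_finite fun j => ?_
      have hc : Continuous fun x : Fin 2 → ℝ => B j ⬝ᵥ (x - f) := by
        simp only [dotProduct, Pi.sub_apply]
        exact continuous_finset_sum _ fun k _ =>
          continuous_const.mul ((continuous_apply k).sub continuous_const)
      exact isOpen_lt hc continuous_const
    have hxU : x ∈ {x : Fin 2 → ℝ | ∀ j, B j ⬝ᵥ (x - f) < 1} :=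
      fun j => lt_of_le_of_lt (hdom x hxC j) hlt
    have hsub : {x : Fin 2 → ℝ | ∀ j, B j ⬝ᵥ (x - f) < 1} ⊆ Mset f B :=
      fun x hx j => le_of_lt (hx j)
    exact hlf x (hUopen.subset_interior_iff.mpr hsub hxU) hxI
  -- convexity of the upper halfspace
  have hcomb : ∀ (a b : ℝ) (x y : Fin 2 → ℝ), a + b = 1 →
      B i ⬝ᵥ (a • x + b • y - f) = a * (B i ⬝ᵥ (x - f)) + b * (B i ⬝ᵥ (y - f)) := by
    intro a b x y hab
    have he : a • x + b • y - f = a • (x - f) + b • (y - f) := by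
      match_scalars <;> linarith
    rw [he, dotProduct_add, dotProduct_smul, dotProduct_smul, smul_eq_mul, smul_eq_mul]
  have hconvHalf : Convex ℝ {x : Fin 2 → ℝ | (1:ℝ) ≤ B i ⬝ᵥ (x - f)} := by
    intro x hx y hy a b ha hb hab
    have := hcomb a b x y hab
    simp only [Set.mem_setOf_eq] at hx hy ⊢
    rw [this]
    nlinarith
  have hHull : ∀ x ∈ intHull (rayCone f r₁ r₂), (1:ℝ) ≤ B i ⬝ᵥ (x - f) := by
    intro x hx
    exact convexHull_min hIntGe hconvHalf hx
  -- cone is convex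
  have hconeConv : Convex ℝ (rayCone f r₁ r₂) := by
    rintro x ⟨a₁, a₂, ha₁, ha₂, rfl⟩ y ⟨c₁, c₂, hc₁, hc₂, rfl⟩ a b ha hb hab
    refine ⟨a * a₁ + b * c₁, a * a₂ + b * c₂, by positivity, by positivity, ?_⟩
    match_scalars <;> nlinarith
  have hp₁C : p₁ ∈ rayCone f r₁ r₂ :=
    ⟨(psi B r₁)⁻¹, 0, inv_nonneg.mpr h₁.le, le_refl _, by rw [hp₁]; module⟩
  have hp₂C : p₂ ∈ rayCone f r₁ r₂ :=
    ⟨0, (psi B r₂)⁻¹, le_refl _, inv_nonneg.mpr h₂.le, by rw [hp₂]; module⟩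
  have hsegC : segment ℝ p₁ p₂ ⊆ rayCone f r₁ r₂ := hconeConv.segment_subset hp₁C hp₂C
  -- on the segment the functional equals 1
  have hsegEq : ∀ x ∈ segment ℝ p₁ p₂, B i ⬝ᵥ (x - f) = 1 := by
    rintro x ⟨a, b, ha, hb, hab, rfl⟩
    rw [hcomb a b p₁ p₂ hab, hf₁, hf₂]
    linarith
  -- cone points on the facet lie on the segment
  have hConeSeg : ∀ x ∈ rayCone f r₁ r₂, B i ⬝ᵥ (x - f) = 1 → x ∈ segment ℝ p₁ p₂ := by
    rintro x ⟨s₁, s₂, hs₁, hs₂, rfl⟩ hx1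
    have hx : f + s₁ • r₁ + s₂ • r₂ - f = s₁ • r₁ + s₂ • r₂ := by abel
    rw [hx, dotProduct_add, dotProduct_smul, dotProduct_smul, smul_eq_mul, smul_eq_mul,
      hψ₁, hψ₂] at hx1
    refine ⟨s₁ * psi B r₁, s₂ * psi B r₂, by positivity, by positivity, hx1, ?_⟩
    rw [hp₁, hp₂]
    match_scalars
    · linarith
    · field_simp
    · field_simp
  constructor
  · -- part (i)
    intro y hy hyo
    have hyS : y ∈ segment ℝ p₁ p₂ ∩ {x | IsIntPoint x} := by
      rw [hy]; exact rfl
    obtain ⟨hySeg, hyInt⟩ := hyS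
    have hyC : y ∈ rayCone f r₁ r₂ := hsegC hySeg
    have hyH : y ∈ intHull (rayCone f r₁ r₂) :=
      subset_convexHull ℝ _ ⟨hyC, hyInt⟩
    -- key: any point of the hull on the facet equals y
    have hkey : ∀ z ∈ intHull (rayCone f r₁ r₂), B i ⬝ᵥ (z - f) = 1 → z = y := by
      intro z hz hz1
      rw [intHull, convexHull_eq] at hz
      obtain ⟨ι, t, w, g, hw0, hw1, hgS, hcm⟩ := hz
      have hzsum : z = ∑ j ∈ t, w j • g j := by
        rw [← hcm, Finset.centerMass_eq_of_sum_1 _ _ hw1]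
      -- each point with positive weight equals y
      have hterm : ∀ j ∈ t, w j * (B i ⬝ᵥ (g j - f) - 1) = 0 := by
        have hsum0 : ∑ j ∈ t, w j * (B i ⬝ᵥ (g j - f) - 1) = 0 := by
          have hL : B i ⬝ᵥ z = ∑ j ∈ t, w j * (B i ⬝ᵥ g j) := by
            rw [hzsum]; exact dot_sum_aux _ _ _ _
          have hz1' : B i ⬝ᵥ z - B i ⬝ᵥ f = 1 := by
            rw [← dotProduct_sub]; exact hz1
          calc ∑ j ∈ t, w j * (B i ⬝ᵥ (g j - f) - 1)
              = ∑ j ∈ t, (w j * (B i ⬝ᵥ g j) - w j * (B i ⬝ᵥ f) - w j) := by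
                refine Finset.sum_congr rfl fun j _ => ?_
                rw [dotProduct_sub]; ring
            _ = (∑ j ∈ t, w j * (B i ⬝ᵥ g j)) - (∑ j ∈ t, w j) * (B i ⬝ᵥ f)
                - ∑ j ∈ t, w j := by
                rw [Finset.sum_sub_distrib, Finset.sum_sub_distrib, Finset.sum_mul]
            _ = 0 := by rw [← hL, hw1]; linarith
        have hnn : ∀ j ∈ t, 0 ≤ w j * (B i ⬝ᵥ (g j - f) - 1) := by
          intro j hj
          have h1 : (1:ℝ) ≤ B i ⬝ᵥ (g j - f) := hIntGe _ (hgS j hj)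
          have := hw0 j hj
          nlinarith
        intro j hj
        exact (Finset.sum_eq_zero_iff_of_nonneg hnn).mp hsum0 j hj
      have hgy : ∀ j ∈ t, w j ≠ 0 → g j = y := by
        intro j hj hwj
        have h0 := hterm j hj
        have hge : B i ⬝ᵥ (g j - f) = 1 := by
          rcases mul_eq_zero.mp h0 with h | h
          · exact absurd h hwj
          · linarith
        have hseg : g j ∈ segment ℝ p₁ p₂ := hConeSeg _ (hgS j hj).1 hge
        have : g j ∈ segment ℝ p₁ p₂ ∩ {x | IsIntPoint x} := ⟨hseg, (hgS j hj).2⟩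
        rw [hy] at this
        exact this
      have : z = ∑ j ∈ t, w j • y := by
        rw [hzsum]
        refine Finset.sum_congr rfl fun j hj => ?_
        by_cases hwj : w j = 0
        · simp [hwj]
        · rw [hgy j hj hwj]
      rw [this, ← Finset.sum_smul, hw1, one_smul]
    refine ⟨hHull, hyH, ?_⟩
    rintro ⟨z₁, hz₁, z₂, hz₂, hzne₁, hzne₂, hmid⟩
    have h1 := hHull z₁ hz₁
    have h2 := hHull z₂ hz₂
    have hy1 : B i ⬝ᵥ (y - f) = 1 := hsegEq y hySeg
    have hmid' : y = (2⁻¹:ℝ) • z₁ + (2⁻¹:ℝ) • z₂ := by rw [hmid, smul_add]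
    have hcmb : B i ⬝ᵥ (y - f) = 2⁻¹ * (B i ⬝ᵥ (z₁ - f)) + 2⁻¹ * (B i ⬝ᵥ (z₂ - f)) := by
      rw [hmid']
      exact hcomb _ _ _ _ (by norm_num)
    have he1 : B i ⬝ᵥ (z₁ - f) = 1 := by rw [hy1] at hcmb; linarith
    exact hzne₁ (hkey z₁ hz₁ he1)
  · -- part (ii)
    rintro ⟨y₁, y₂, hne12, ⟨hseg₁, hint₁⟩, ⟨hseg₂, hint₂⟩⟩
    refine ⟨hHull, y₁, y₂, hne12, hint₁, hint₂,
      subset_convexHull ℝ _ ⟨hsegC hseg₁, hint₁⟩,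
      subset_convexHull ℝ _ ⟨hsegC hseg₂, hint₂⟩,
      hsegEq y₁ hseg₁, hsegEq y₂ hseg₂⟩
end
end

section
/- Let p^1, p^2, p^3 ∈ ℝ² be pairwise linearly independent vectors, and let y^1, y^2, y^3 ∈ ℝ² be such that y^1 lies in the open segment between p^1 and p^2, y^2 lies in the open segment between p^2 and p^3, and y^3 lies in the open segment between p^3 and p^1. Then there exists exactly one triple (a^1, a^2, a^3) ∈ (ℝ²)³ satisfying a^1·y^1 = 1, a^2·y^2 = 1, a^3·y^3 = 1, a^1·p^2 = a^2·p^2, a^2·p^3 = a^3·p^3, and a^3·p^1 = a^1·p^1. (Equivalently: a triangle containing the origin in its interior is uniquely determined by its three corner directions and one point in the relative interior of each facet.) -/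
open Matrix

lemma dual_exists_unique (p q : Fin 2 → ℝ) (h : LinearIndependent ℝ ![p, q]) (s t : ℝ) :
    ∃! a : Fin 2 → ℝ, a ⬝ᵥ p = s ∧ a ⬝ᵥ q = t := by
  set M : Matrix (Fin 2) (Fin 2) ℝ := Matrix.of ![p, q] with hM
  have hU : IsUnit M := Matrix.linearIndependent_rows_iff_isUnit.mp h
  have hinj : Function.Injective M.mulVec := Matrix.mulVec_injective_iff_isUnit.mpr hU
  have key : ∀ a : Fin 2 → ℝ, (a ⬝ᵥ p = s ∧ a ⬝ᵥ q = t) ↔ M *ᵥ a = ![s, t] := by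
    intro a
    constructor
    · rintro ⟨h1, h2⟩
      funext i
      simp only [dotProduct, Fin.sum_univ_two] at h1 h2
      fin_cases i <;>
        simp [hM, Matrix.mulVec, dotProduct, Fin.sum_univ_two] <;> linarith
    · intro hh
      constructor
      · have := congrFun hh 0
        simp only [hM, Matrix.mulVec, dotProduct, Fin.sum_univ_two] at this ⊢
        simp at this ⊢; linarith
      · have := congrFun hh 1
        simp only [hM, Matrix.mulVec, dotProduct, Fin.sum_univ_two] at this ⊢
        simp at this ⊢; linarith
  refine ⟨M⁻¹ *ᵥ ![s, t], ?_, ?_⟩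
  · refine (key _).mpr ?_
    rw [Matrix.mulVec_mulVec, Matrix.mul_nonsing_inv _ ((Matrix.isUnit_iff_isUnit_det M).mp hU),
      Matrix.one_mulVec]
  · intro a ha
    rw [key a] at ha
    apply hinj
    rw [ha, Matrix.mulVec_mulVec, Matrix.mul_nonsing_inv _ ((Matrix.isUnit_iff_isUnit_det M).mp hU),
      Matrix.one_mulVec]

lemma scalar_system (l₁ m₁ l₂ m₂ l₃ m₃ : ℝ)
    (hl₁ : 0 < l₁) (hm₁ : 0 < m₁) (hl₂ : 0 < l₂) (hm₂ : 0 < m₂)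
    (hl₃ : 0 < l₃) (hm₃ : 0 < m₃) :
    ∃! s : ℝ × ℝ × ℝ,
      l₁ * s.1 + m₁ * s.2.1 = 1 ∧ l₂ * s.2.1 + m₂ * s.2.2 = 1 ∧
      m₃ * s.1 + l₃ * s.2.2 = 1 := by
  have hD : (0:ℝ) < l₁*l₂*l₃ + m₁*m₂*m₃ := by positivity
  have hD' : l₁*l₂*l₃ + m₁*m₂*m₃ ≠ 0 := ne_of_gt hD
  refine ⟨((l₂*l₃ - m₁*l₃ + m₁*m₂)/(l₁*l₂*l₃ + m₁*m₂*m₃),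
          (l₁*l₃ - l₁*m₂ + m₂*m₃)/(l₁*l₂*l₃ + m₁*m₂*m₃),
          (l₁*l₂ + m₁*m₃ - l₂*m₃)/(l₁*l₂*l₃ + m₁*m₂*m₃)), ⟨?_, ?_, ?_⟩, ?_⟩
  · field_simp; ring
  · field_simp; ring
  · field_simp; ring
  · rintro ⟨t₁, t₂, t₃⟩ ⟨e1, e2, e3⟩
    simp only at e1 e2 e3
    have h1 : t₁ = (l₂*l₃ - m₁*l₃ + m₁*m₂)/(l₁*l₂*l₃ + m₁*m₂*m₃) := by
      field_simp
      linear_combination (m₁*m₂) * e3 + (l₂*l₃) * e1 - (m₁*l₃) * e2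
    have h2 : t₂ = (l₁*l₃ - l₁*m₂ + m₂*m₃)/(l₁*l₂*l₃ + m₁*m₂*m₃) := by
      field_simp
      linear_combination (m₂*m₃) * e1 + (l₁*l₃) * e2 - (l₁*m₂) * e3
    have h3 : t₃ = (l₁*l₂ + m₁*m₃ - l₂*m₃)/(l₁*l₂*l₃ + m₁*m₂*m₃) := by
      field_simp
      linear_combination (m₁*m₃) * e2 + (l₁*l₂) * e3 - (l₂*m₃) * e1
    exact Prod.ext h1 (Prod.ext h2 h3)

/-- a triangle containing the origin in its interior is uniquely
determined by its three corner directions `p₁, p₂, p₃` (pairwise linearly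
independent) and one point in the relative interior of each facet. -/
theorem stmt19 (p₁ p₂ p₃ y₁ y₂ y₃ : Fin 2 → ℝ)
    (h12 : LinearIndependent ℝ ![p₁, p₂])
    (h23 : LinearIndependent ℝ ![p₂, p₃])
    (h31 : LinearIndependent ℝ ![p₃, p₁])
    (hy₁ : y₁ ∈ openSegment ℝ p₁ p₂)
    (hy₂ : y₂ ∈ openSegment ℝ p₂ p₃)
    (hy₃ : y₃ ∈ openSegment ℝ p₃ p₁) :
    ∃! a : (Fin 2 → ℝ) × (Fin 2 → ℝ) × (Fin 2 → ℝ),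
      a.1 ⬝ᵥ y₁ = 1 ∧ a.2.1 ⬝ᵥ y₂ = 1 ∧ a.2.2 ⬝ᵥ y₃ = 1 ∧
      a.1 ⬝ᵥ p₂ = a.2.1 ⬝ᵥ p₂ ∧ a.2.1 ⬝ᵥ p₃ = a.2.2 ⬝ᵥ p₃ ∧
      a.2.2 ⬝ᵥ p₁ = a.1 ⬝ᵥ p₁ := by
  obtain ⟨l₁, m₁, hl₁, hm₁, hs₁, hy₁'⟩ := hy₁
  obtain ⟨l₂, m₂, hl₂, hm₂, hs₂, hy₂'⟩ := hy₂
  obtain ⟨l₃, m₃, hl₃, hm₃, hs₃, hy₃'⟩ := hy₃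
  have dot₁ : ∀ a : Fin 2 → ℝ, a ⬝ᵥ y₁ = l₁ * (a ⬝ᵥ p₁) + m₁ * (a ⬝ᵥ p₂) := by
    intro a; rw [← hy₁']; simp [dotProduct_add, dotProduct_smul, smul_eq_mul]
  have dot₂ : ∀ a : Fin 2 → ℝ, a ⬝ᵥ y₂ = l₂ * (a ⬝ᵥ p₂) + m₂ * (a ⬝ᵥ p₃) := by
    intro a; rw [← hy₂']; simp [dotProduct_add, dotProduct_smul, smul_eq_mul]
  have dot₃ : ∀ a : Fin 2 → ℝ, a ⬝ᵥ y₃ = l₃ * (a ⬝ᵥ p₃) + m₃ * (a ⬝ᵥ p₁) := by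
    intro a; rw [← hy₃']; simp [dotProduct_add, dotProduct_smul, smul_eq_mul]
  obtain ⟨⟨s₁, s₂, s₃⟩, ⟨e1, e2, e3⟩, suniq⟩ :=
    scalar_system l₁ m₁ l₂ m₂ l₃ m₃ hl₁ hm₁ hl₂ hm₂ hl₃ hm₃
  simp only at e1 e2 e3
  obtain ⟨a₁, ⟨ha₁p, ha₁q⟩, ha₁u⟩ := dual_exists_unique p₁ p₂ h12 s₁ s₂
  obtain ⟨a₂, ⟨ha₂p, ha₂q⟩, ha₂u⟩ := dual_exists_unique p₂ p₃ h23 s₂ s₃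
  obtain ⟨a₃, ⟨ha₃p, ha₃q⟩, ha₃u⟩ := dual_exists_unique p₃ p₁ h31 s₃ s₁
  refine ⟨(a₁, a₂, a₃), ⟨?_, ?_, ?_, ?_, ?_, ?_⟩, ?_⟩
  · rw [dot₁, ha₁p, ha₁q]; exact e1
  · rw [dot₂, ha₂p, ha₂q]; exact e2
  · rw [dot₃, ha₃p, ha₃q]; linarith
  · simp [ha₁q, ha₂p]
  · simp [ha₂q, ha₃p]
  · simp [ha₃q, ha₁p]
  · rintro ⟨b₁, b₂, b₃⟩ ⟨f1, f2, f3, f4, f5, f6⟩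
    simp only at f1 f2 f3 f4 f5 f6
    rw [dot₁] at f1; rw [dot₂] at f2; rw [dot₃] at f3
    have hts : (b₁ ⬝ᵥ p₁, b₁ ⬝ᵥ p₂, b₂ ⬝ᵥ p₃) = (s₁, s₂, s₃) := by
      apply suniq
      refine ⟨by simpa using f1, ?_, ?_⟩
      · simp only
        rw [f4]; exact f2
      · simp only
        rw [f5, ← f6]; linarith
    have ht1 : b₁ ⬝ᵥ p₁ = s₁ := congrArg Prod.fst hts
    have ht2 : b₁ ⬝ᵥ p₂ = s₂ := congrArg (fun x => x.2.1) hts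
    have ht3 : b₂ ⬝ᵥ p₃ = s₃ := congrArg (fun x => x.2.2) hts
    have hb₁ : b₁ = a₁ := ha₁u b₁ ⟨ht1, ht2⟩
    have hb₂ : b₂ = a₂ := ha₂u b₂ ⟨f4 ▸ ht2, ht3⟩
    have hb₃ : b₃ = a₃ := ha₃u b₃ ⟨f5 ▸ ht3, by rw [f6, ht1]⟩
    simp [hb₁, hb₂, hb₃]
end
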